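/- arXiv:1203.4299 — 2 statements merged into one kernel-verified Lean document; each statement's English description precedes it below -/
import Mathlib

section
/- Let G, A, B, C be groups and let α : G → A, β : G → B, α' : B → C, β' : A → C be group homomorphisms with β surjective, α' surjective, and β' ∘ α = α' ∘ β. Suppose a, b ∈ G satisfy: ker α is generated by a, ker β is generated by b, ker α' is generated by β(a), and ker β' is generated by α(b). Then the common composite π := β' ∘ α = α' ∘ β is surjective and its kernel equals the subgroup of G generated by {a, b}. -/
/-- `ker (g ∘ f) = f⁻¹(f ⟨a⟩) = ⟨a⟩ ⊔ ker f`. -/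
theorem MonoidHom.ker_comp_eq_closure_pair {G B C : Type*} [Group G] [Group B] [Group C]
    (f : G →* B) (g : B →* C) {a b : G} (hf : f.ker = Subgroup.zpowers b)
    (hg : g.ker = Subgroup.zpowers (f a)) : (g.comp f).ker = Subgroup.closure {a, b} := by
  rw [← MonoidHom.comap_ker, hg, ← MonoidHom.map_zpowers, Subgroup.comap_map_eq, hf,
    Subgroup.zpowers_eq_closure, Subgroup.zpowers_eq_closure, ← Subgroup.closure_union,
    Set.singleton_union]

theorem stmt_16_general {G A B C : Type*} [Group G] [Group A] [Group B] [Group C]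
    (α : G →* A) (β : G →* B) (α' : B →* C) (β' : A →* C)
    (hβ : Function.Surjective β) (hα' : Function.Surjective α')
    (hcomm : β'.comp α = α'.comp β)
    (a b : G)
    (hkβ : β.ker = Subgroup.zpowers b)
    (hkα' : α'.ker = Subgroup.zpowers (β a)) :
    Function.Surjective (β'.comp α) ∧
      (β'.comp α).ker = Subgroup.closure ({a, b} : Set G) := by
  rw [hcomm]
  exact ⟨hα'.comp hβ, β.ker_comp_eq_closure_pair α' hkβ hkα'⟩

/-- Abstraction of the commutative diagram (3.1): the common composite is surjective with
kernel generated by `{a, b}`. -/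
theorem stmt_16 {G A B C : Type*} [Group G] [Group A] [Group B] [Group C]
    (α : G →* A) (β : G →* B) (α' : B →* C) (β' : A →* C)
    (hβ : Function.Surjective β) (hα' : Function.Surjective α')
    (hcomm : β'.comp α = α'.comp β)
    (a b : G)
    (hkα : α.ker = Subgroup.zpowers a)
    (hkβ : β.ker = Subgroup.zpowers b)
    (hkα' : α'.ker = Subgroup.zpowers (β a))
    (hkβ' : β'.ker = Subgroup.zpowers (α b)) :
    Function.Surjective (β'.comp α) ∧
      (β'.comp α).ker = Subgroup.closure ({a, b} : Set G) :=
  stmt_16_general α β α' β' hβ hα' hcomm a b hkβ hkα'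
end

section
/- Let G, A, B, C be groups with homomorphisms α : G → A, β : G → B, α' : B → C, β' : A → C satisfying β' ∘ α = α' ∘ β =: π, with α, β, α', β' all surjective. Let a, b ∈ G be commuting elements with ker α = ⟨a⟩, ker β = ⟨b⟩, ker α' = ⟨β(a)⟩, ker β' = ⟨α(b)⟩. Further, let f : G → P and g : G → Q be group homomorphisms with f(a) = 1, g(b) = 1, such that f(b) has infinite order and g(a) has infinite order, and suppose that f and g are not simultaneously trivial on any element of the form a^m b^n with (m,n) ≠ (0,0). Then for every ξ ∈ C with the property that some (equivalently any) preimage x of ξ under π satisfies f(x) ∈ ⟨f(b)⟩ and g(x) ∈ ⟨g(a)⟩, there exists a unique element y ∈ ker f ∩ ker g with π(y) = ξ. -/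
/-- Abstraction of Lemma 3.2: any `ξ` whose preimages satisfy the kernel-membership
constraints has a unique preimage in `ker f ∩ ker g` under the composite `π = β' ∘ α`. -/
theorem stmt_17 {G A B C P Q : Type*}
    [Group G] [Group A] [Group B] [Group C] [Group P] [Group Q]
    (α : G →* A) (β : G →* B) (α' : B →* C) (β' : A →* C)
    (hα : Function.Surjective α) (hβ : Function.Surjective β)
    (hα' : Function.Surjective α') (hβ' : Function.Surjective β')
    (hcomm : β'.comp α = α'.comp β)
    (a b : G) (hab : Commute a b)
    (hkα : α.ker = Subgroup.zpowers a)
    (hkβ : β.ker = Subgroup.zpowers b)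
    (hkα' : α'.ker = Subgroup.zpowers (β a))
    (hkβ' : β'.ker = Subgroup.zpowers (α b))
    (f : G →* P) (g : G →* Q)
    (hfa : f a = 1) (hgb : g b = 1)
    (hfb : ¬ IsOfFinOrder (f b)) (hga : ¬ IsOfFinOrder (g a))
    (hsim : ∀ m n : ℤ, f (a ^ m * b ^ n) = 1 → g (a ^ m * b ^ n) = 1 → m = 0 ∧ n = 0) :
    ∀ ξ : C,
      (∃ x : G, β'.comp α x = ξ ∧
          f x ∈ Subgroup.zpowers (f b) ∧ g x ∈ Subgroup.zpowers (g a)) →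
      ∃! y : G, (f y = 1 ∧ g y = 1) ∧ β'.comp α y = ξ := by
  -- π a = 1 and π b = 1
  have hπa : β'.comp α a = 1 := by
    rw [hcomm]
    have : β a ∈ α'.ker := hkα' ▸ Subgroup.mem_zpowers _
    simpa using this
  have hπb : β'.comp α b = 1 := by
    have : α b ∈ β'.ker := hkβ' ▸ Subgroup.mem_zpowers _
    simpa using this
  rintro ξ ⟨x, hx, ⟨n, hn⟩, ⟨m, hm⟩⟩
  refine ⟨x * b ^ (-n) * a ^ (-m), ⟨⟨?_, ?_⟩, ?_⟩, ?_⟩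
  · simp [map_mul, map_zpow, ← hn, hfa, zpow_neg, mul_assoc]
  · simp [map_mul, map_zpow, ← hm, hgb, zpow_neg]
  · simp only [map_mul, map_zpow, hπa, hπb, one_zpow, mul_one, hx]
  · rintro y ⟨⟨hfy, hgy⟩, hπy⟩
    -- show y = x * b^(-n) * a^(-m); first show the difference is trivial
    set y₀ := x * b ^ (-n) * a ^ (-m) with hy₀
    have hfy₀ : f y₀ = 1 := by
      simp [hy₀, map_mul, map_zpow, ← hn, hfa, zpow_neg, mul_assoc]
    have hgy₀ : g y₀ = 1 := by
      simp [hy₀, map_mul, map_zpow, ← hm, hgb, zpow_neg]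
    have hπy₀ : β'.comp α y₀ = ξ := by
      simp only [hy₀, map_mul, map_zpow, hπa, hπb, one_zpow, mul_one, hx]
    set z := y * y₀⁻¹ with hz
    have hπz : β' (α z) = 1 := by
      have : β'.comp α z = 1 := by
        rw [hz, map_mul, map_inv, hπy, hπy₀, mul_inv_cancel]
      simpa using this
    have hαz : α z ∈ Subgroup.zpowers (α b) := hkβ' ▸ hπz
    obtain ⟨k, hk⟩ := hαz
    have hzk : z * b ^ (-k) ∈ Subgroup.zpowers a := by
      rw [← hkα]
      have : α (z * b ^ (-k)) = 1 := by
        simp [map_mul, map_zpow, ← hk, zpow_neg]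
      exact this
    obtain ⟨j, hj⟩ := hzk
    have hzeq : z = a ^ j * b ^ k := by
      simp only [] at hj
      rw [hj]
      group
    have hfz : f (a ^ j * b ^ k) = 1 := by
      rw [← hzeq]; simp [hz, map_mul, hfy, hfy₀]
    have hgz : g (a ^ j * b ^ k) = 1 := by
      rw [← hzeq]; simp [hz, map_mul, hgy, hgy₀]
    obtain ⟨hj0, hk0⟩ := hsim j k hfz hgz
    have : z = 1 := by rw [hzeq, hj0, hk0]; simp
    have := mul_inv_eq_one.mp this
    exact this
end
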